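/- arXiv:2301.04192 — 3 statements merged into one kernel-verified Lean document; each statement's English description precedes it below -/
import Mathlib

section
/- With R = ℂ[z, z⁻¹, u₁, u₂], A = ℂ[z, u₁, u₂] and B₃ the ℂ-subalgebra of R generated by z⁻¹, z³u₁ and z⁻¹u₂, the quotient ℂ-vector space R/(A + B₃) is infinite dimensional; indeed the images of the monomials z^l u₁^i u₂^s with l ≤ −1 and s > 3i − l are ℂ-linearly independent in R/(A + B₃). -/
open MvPolynomial

/-- `R = ℂ[z, z⁻¹, u₁, u₂]`: polynomials in `u₁ = X 0`, `u₂ = X 1` over the ring of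
Laurent polynomials in `z`. -/
noncomputable abbrev LaurentThreefoldRing : Type :=
  MvPolynomial (Fin 2) (LaurentPolynomial ℂ)

/-- The monomial `zˡ` in `R`. -/
noncomputable def zpow (l : ℤ) : LaurentThreefoldRing :=
  MvPolynomial.C (LaurentPolynomial.T l)

/-- `A = ℂ[z, u₁, u₂]`, the ring of functions on the chart `U`. -/
noncomputable def chartA : Subalgebra ℂ LaurentThreefoldRing :=
  Algebra.adjoin ℂ {zpow 1, X 0, X 1}

/-- `B_k`, the ℂ-subalgebra of `R` generated by `z⁻¹`, `zᵏu₁` and `z^{2−k}u₂`,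
the ring of functions on the chart `V` of `W_k`. -/
noncomputable def chartB (k : ℤ) : Subalgebra ℂ LaurentThreefoldRing :=
  Algebra.adjoin ℂ {zpow (-1), zpow k * X 0, zpow (2 - k) * X 1}


/-- The ℂ-subspace `A + B₃` of `R`. -/
noncomputable def sumAB3 : Submodule ℂ LaurentThreefoldRing :=
  chartA.toSubmodule ⊔ (chartB 3).toSubmodule

/-!
Both charts are spanned by monomials `zˡ u₁ⁱ u₂ˢ`: the monomials of `A` have `l ≥ 0` and those
of `B_k` satisfy `l ≤ k i + (2 - k) s`, because both conditions hold for the generators and are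
additive in the exponent. Hence for `l ≤ -1` and `s > 3 i - l` the coefficient of `zˡ u₁ⁱ u₂ˢ`
vanishes on `A + B₃`; these coefficient functionals descend to `R/(A + B₃)` and are dual to the
images of the corresponding (infinitely many) monomials.
-/

theorem LinearIndependent.mkQ_of_biorthogonal {K M ι : Type*} [CommRing K] [AddCommGroup M]
    [Module K M] [DecidableEq ι] (N : Submodule K M) (v : ι → M) (f : ι → M →ₗ[K] K)
    (hfv : ∀ i j, f i (v j) = if i = j then 1 else 0) (hN : ∀ i, N ≤ LinearMap.ker (f i)) :
    LinearIndependent K (N.mkQ ∘ v) := by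
  let Φ : M ⧸ N →ₗ[K] ι → K :=
    N.liftQ (LinearMap.pi f) fun x hx => by
      simpa [funext_iff] using fun i => hN i hx
  refine .of_comp Φ ?_
  convert Pi.linearIndependent_single_one ι K with j
  ext i
  simp [Φ, hfv, Pi.single_apply]

theorem Finsupp.single_add_single_injective {σ : Type*} {a b : σ} (hab : a ≠ b) :
    Function.Injective fun p : ℕ × ℕ => Finsupp.single a p.1 + Finsupp.single b p.2 := by
  intro p q h
  have ha := DFunLike.congr_fun h a
  have hb := DFunLike.congr_fun h b
  simp [hab, hab.symm] at ha hb
  exact Prod.ext ha hb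

namespace LaurentThreefoldRing

noncomputable def monomial (t : ℤ × ℕ × ℕ) : LaurentThreefoldRing :=
  zpow t.1 * X 0 ^ t.2.1 * X 1 ^ t.2.2

theorem monomial_zero : monomial 0 = 1 := by
  simp [monomial, zpow]

theorem monomial_add (t t' : ℤ × ℕ × ℕ) : monomial (t + t') = monomial t * monomial t' := by
  simp only [monomial, zpow, Prod.fst_add, Prod.snd_add, LaurentPolynomial.T_add, map_mul]
  ring

/-- The coefficient of `zˡ u₁ⁱ u₂ˢ`, as a `ℂ`-linear functional. -/
noncomputable def coeff (t : ℤ × ℕ × ℕ) : LaurentThreefoldRing →ₗ[ℂ] ℂ :=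
  Finsupp.lapply t.1 ∘ₗ (AddMonoidAlgebra.coeffLinearEquiv ℂ).toLinearMap ∘ₗ
    (MvPolynomial.lcoeff _ (Finsupp.single 0 t.2.1 + Finsupp.single 1 t.2.2)).restrictScalars ℂ

theorem monomial_eq (t : ℤ × ℕ × ℕ) :
    monomial t = MvPolynomial.monomial (Finsupp.single 0 t.2.1 + Finsupp.single 1 t.2.2)
      (LaurentPolynomial.T t.1) := by
  simp [monomial, zpow, X_pow_eq_monomial, C_mul_monomial, monomial_mul]

theorem coeff_monomial (t t' : ℤ × ℕ × ℕ) : coeff t (monomial t') = if t = t' then 1 else 0 := by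
  obtain ⟨l, i, s⟩ := t
  obtain ⟨l', i', s'⟩ := t'
  have hexp := (Finsupp.single_add_single_injective (zero_ne_one (α := Fin 2))).eq_iff
    (a := (i', s')) (b := (i, s))
  simp only [Prod.mk.injEq] at hexp
  rw [monomial_eq]
  simp only [coeff, LinearMap.coe_comp, Function.comp_apply, LinearMap.coe_restrictScalars,
    lcoeff_apply, MvPolynomial.coeff_monomial, hexp]
  split_ifs <;> simp_all [eq_comm]

noncomputable def monomialSpan (E : AddSubmonoid (ℤ × ℕ × ℕ)) :
    Subalgebra ℂ LaurentThreefoldRing :=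
  (Submodule.span ℂ (monomial '' E)).toSubalgebra
    (Submodule.subset_span ⟨0, E.zero_mem, monomial_zero⟩)
    fun x y hx hy => by
      have hxy := Submodule.mul_mem_mul hx hy
      rw [Submodule.span_mul_span] at hxy
      refine Submodule.span_mono ?_ hxy
      rintro _ ⟨_, ⟨t, ht, rfl⟩, _, ⟨t', ht', rfl⟩, rfl⟩
      exact ⟨t + t', E.add_mem ht ht', monomial_add t t'⟩

theorem monomial_mem_monomialSpan {E : AddSubmonoid (ℤ × ℕ × ℕ)} {t : ℤ × ℕ × ℕ} (ht : t ∈ E) :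
    monomial t ∈ monomialSpan E :=
  Submodule.subset_span ⟨t, ht, rfl⟩

theorem monomialSpan_le_ker_coeff {E : AddSubmonoid (ℤ × ℕ × ℕ)} {t : ℤ × ℕ × ℕ} (ht : t ∉ E) :
    (monomialSpan E).toSubmodule ≤ LinearMap.ker (coeff t) := by
  refine Submodule.span_le.mpr ?_
  rintro _ ⟨t', ht', rfl⟩
  have : t ≠ t' := fun h => ht (h ▸ ht')
  simp [coeff_monomial, this]

theorem adjoin_monomial_image_le {G : Set (ℤ × ℕ × ℕ)} {E : AddSubmonoid (ℤ × ℕ × ℕ)}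
    (hG : G ⊆ E) : Algebra.adjoin ℂ (monomial '' G) ≤ monomialSpan E :=
  Algebra.adjoin_le <| Set.image_subset_iff.mpr fun _ ht => monomial_mem_monomialSpan (hG ht)

def chartAExponents : AddSubmonoid (ℤ × ℕ × ℕ) where
  carrier := {t | 0 ≤ t.1}
  add_mem' {_ _} ha hb := show (0 : ℤ) ≤ _ + _ from add_nonneg ha hb
  zero_mem' := le_refl (0 : ℤ)

theorem mem_chartAExponents {t : ℤ × ℕ × ℕ} : t ∈ chartAExponents ↔ 0 ≤ t.1 := Iff.rfl

def chartBExponents (k : ℤ) : AddSubmonoid (ℤ × ℕ × ℕ) where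
  carrier := {t | t.1 ≤ k * t.2.1 + (2 - k) * t.2.2}
  add_mem' {_ _} ha hb := by
    simp only [Set.mem_ofPred_eq, Prod.fst_add, Prod.snd_add, Nat.cast_add] at *
    linarith
  zero_mem' := by simp

theorem mem_chartBExponents {k : ℤ} {t : ℤ × ℕ × ℕ} :
    t ∈ chartBExponents k ↔ t.1 ≤ k * t.2.1 + (2 - k) * t.2.2 := Iff.rfl

theorem chartA_le_monomialSpan : chartA ≤ monomialSpan chartAExponents := by
  have hgen : ({zpow 1, X 0, X 1} : Set LaurentThreefoldRing) =
      monomial '' {(1, 0, 0), (0, 1, 0), (0, 0, 1)} := by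
    simp [Set.image_insert_eq, monomial, zpow]
  rw [chartA, hgen]
  exact adjoin_monomial_image_le (by simp [Set.insert_subset_iff, mem_chartAExponents])

theorem chartB_le_monomialSpan (k : ℤ) : chartB k ≤ monomialSpan (chartBExponents k) := by
  have hgen : ({zpow (-1), zpow k * X 0, zpow (2 - k) * X 1} : Set LaurentThreefoldRing) =
      monomial '' {(-1, 0, 0), (k, 1, 0), (2 - k, 0, 1)} := by
    simp [Set.image_insert_eq, monomial]
  rw [chartB, hgen]
  exact adjoin_monomial_image_le (by simp [Set.insert_subset_iff, mem_chartBExponents])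

theorem chartA_sup_chartB_le_ker_coeff {k : ℤ} {t : ℤ × ℕ × ℕ} (hA : t.1 < 0)
    (hB : k * t.2.1 + (2 - k) * t.2.2 < t.1) :
    chartA.toSubmodule ⊔ (chartB k).toSubmodule ≤ LinearMap.ker (coeff t) :=
  sup_le
    ((Subalgebra.toSubmodule.monotone chartA_le_monomialSpan).trans
      (monomialSpan_le_ker_coeff (mem_chartAExponents.not.mpr hA.not_ge)))
    ((Subalgebra.toSubmodule.monotone (chartB_le_monomialSpan k)).trans
      (monomialSpan_le_ker_coeff (mem_chartBExponents.not.mpr hB.not_ge)))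

end LaurentThreefoldRing

/-- The quotient `R/(A + B₃)` is an infinite-dimensional ℂ-vector space; indeed the images of
the monomials `zˡ u₁ⁱ u₂ˢ` with `l ≤ −1` and `s > 3 i − l` are ℂ-linearly independent
in `R/(A + B₃)`. -/
theorem quotient_by_chartA_add_chartB_three_infiniteDimensional :
    ¬ FiniteDimensional ℂ (LaurentThreefoldRing ⧸ sumAB3) ∧
      LinearIndependent ℂ
        (fun t : {t : ℤ × ℕ × ℕ // t.1 ≤ -1 ∧ 3 * (t.2.1 : ℤ) - t.1 < (t.2.2 : ℤ)} =>
          Submodule.mkQ sumAB3 (zpow t.1.1 * X 0 ^ t.1.2.1 * X 1 ^ t.1.2.2)) := by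
  set S := {t : ℤ × ℕ × ℕ // t.1 ≤ -1 ∧ 3 * (t.2.1 : ℤ) - t.1 < (t.2.2 : ℤ)}
  have hli : LinearIndependent ℂ (sumAB3.mkQ ∘ fun t : S => LaurentThreefoldRing.monomial t.1) :=
    .mkQ_of_biorthogonal _ _ (fun t => LaurentThreefoldRing.coeff t.1)
      (fun t t' => by
        simp [LaurentThreefoldRing.coeff_monomial, Subtype.val_injective.eq_iff])
      (fun t => LaurentThreefoldRing.chartA_sup_chartB_le_ker_coeff (k := 3)
        (by linarith [t.2.1]) (by linarith [t.2.2]))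
  have : Infinite S :=
    Infinite.of_injective (fun n : ℕ => ⟨(-1, 0, n + 2), by norm_num, by push_cast; omega⟩)
      fun m n h => by simpa using congrArg (fun t : S => t.1.2.2) h
  exact ⟨fun _ => Module.Finite.not_linearIndependent_of_infinite _ hli, hli⟩
end

section
/- Let j ≥ 2. For every integer r with 1 ≤ r ≤ 2j−2 there exist a, b ∈ ℂ^{2j−2} with (a,b) ≠ (0,0) such that the (4j−4) × (2j−2) stacked triangular Hankel matrix M(a,b) has rank exactly r. Consequently every cokernel dimension (stalk rank of the quantum moduli space) between 2j−2 and 4j−5 occurs. -/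
/-!
Take `a = e_k` (the `k`-th standard basis vector, `k = r - 1`) and `b = 0`. Then `H(e_k)` has
ones exactly on the antidiagonal `i + m = k` of its top-left `(k+1) × (k+1)` block, so it squares
to the diagonal projection `D` onto the first `k + 1` coordinates and satisfies `H(e_k) D = H(e_k)`;
hence `rank H(e_k) = rank D = k + 1 = r`, and stacking a zero block does not change the rank.
-/

/-- The `n × n` triangular Hankel matrix of the vector `a = (a₀, …, a_{n−1})`:
its `(i, m)` entry is `a_{i+m}` when `i + m ≤ n − 1`, and `0` otherwise. -/
def triHankel {n : ℕ} (a : Fin n → ℂ) : Matrix (Fin n) (Fin n) ℂ :=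
  fun i m => if h : (i : ℕ) + (m : ℕ) < n then a ⟨(i : ℕ) + (m : ℕ), h⟩ else 0

/-- For `a, b ∈ ℂⁿ`, the `2n × n` matrix obtained by stacking the triangular Hankel
matrices `H(a)` and `H(b)`. -/
def stackedTriHankel {n : ℕ} (a b : Fin n → ℂ) : Matrix (Fin n ⊕ Fin n) (Fin n) ℂ :=
  Matrix.fromRows (triHankel a) (triHankel b)

namespace Matrix

variable {R m₁ m₂ n : Type*}

theorem rank_fromRows_zero_right [Field R] [Finite m₁] [Finite m₂] [Fintype n]
    (A : Matrix m₁ n R) : (fromRows A (0 : Matrix m₂ n R)).rank = A.rank := by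
  have hrow : (fromRows A (0 : Matrix m₂ n R)).row = Sum.elim A.row 0 := by
    ext (i | i) <;> rfl
  rw [rank_eq_finrank_span_row, rank_eq_finrank_span_row, hrow, Set.Sum.elim_range,
    Submodule.span_union, sup_eq_left.mpr]
  rw [Submodule.span_le]
  rintro _ ⟨i, rfl⟩
  exact Submodule.zero_mem _

theorem rank_eq_of_mul_self_eq [Fintype n] [CommRing R] [StrongRankCondition R]
    {A B : Matrix n n R} (hAA : A * A = B) (hAB : A * B = A) : A.rank = B.rank :=
  le_antisymm (hAB ▸ rank_mul_le_right A B) (hAA ▸ rank_mul_le_left A A)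

end Matrix

open Matrix

theorem triHankel_zero {n : ℕ} : triHankel (0 : Fin n → ℂ) = 0 := by
  ext i m
  simp [triHankel]

theorem triHankel_single_one_apply {n : ℕ} (K i m : Fin n) :
    triHankel (Pi.single K 1) i m = if (i : ℕ) + m = K then 1 else 0 := by
  unfold triHankel
  split_ifs <;> simp [Pi.single_apply, Fin.ext_iff] <;> omega

theorem triHankel_single_one_mul_self {n : ℕ} (K : Fin n) :
    triHankel (Pi.single K 1) * triHankel (Pi.single K 1) =
      diagonal fun m => if m ≤ K then 1 else 0 := by
  ext i m
  simp only [mul_apply, triHankel_single_one_apply, diagonal_apply, ite_zero_mul_ite_zero,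
    mul_one]
  by_cases hi : i ≤ K
  · rw [Fintype.sum_eq_single ⟨K - i, by omega⟩
      fun l hl => if_neg fun h => hl (Fin.ext (by simp; omega))]
    by_cases him : i = m
    · subst him
      simp [hi]
    · rw [if_neg him, if_neg fun h => him (Fin.ext (by simp at h; omega))]
  · rw [Fintype.sum_eq_zero _ fun l => if_neg (by omega)]
    simp [hi]

theorem triHankel_single_one_mul_diagonal {n : ℕ} (K : Fin n) :
    triHankel (Pi.single K 1) * (diagonal fun m => if m ≤ K then 1 else 0) =
      triHankel (Pi.single K 1) := by
  ext i m
  simp only [mul_diagonal, triHankel_single_one_apply, ite_zero_mul_ite_zero, mul_one]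
  exact if_ctx_congr (and_iff_left_of_imp fun _ => by rw [Fin.le_def]; omega)
    (fun _ => rfl) fun _ => rfl

theorem rank_triHankel_single_one {n : ℕ} (K : Fin n) :
    (triHankel (Pi.single K 1)).rank = K + 1 := by
  rw [rank_eq_of_mul_self_eq (triHankel_single_one_mul_self K)
    (triHankel_single_one_mul_diagonal K), rank_diagonal]
  simp [Fintype.card_subtype, Finset.filter_ge_eq_Iic]

theorem stackedTriHankel_rank_surjective_general (j : ℕ) (r : ℕ) (hr1 : 1 ≤ r)
    (hr2 : r ≤ 2 * j - 2) :
    ∃ a b : Fin (2 * j - 2) → ℂ, (a, b) ≠ (0, 0) ∧ (stackedTriHankel a b).rank = r := by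
  let K : Fin (2 * j - 2) := ⟨r - 1, by omega⟩
  refine ⟨Pi.single K 1, 0, by simp, ?_⟩
  rw [stackedTriHankel, triHankel_zero, rank_fromRows_zero_right, rank_triHankel_single_one]
  exact Nat.sub_add_cancel hr1

/-- For `j ≥ 2` and every integer `r` with `1 ≤ r ≤ 2j−2`, there exist `a, b ∈ ℂ^{2j−2}` with
`(a,b) ≠ (0,0)` such that the `(4j−4) × (2j−2)` stacked triangular Hankel matrix `M(a,b)` has
rank exactly `r`; consequently every cokernel dimension between `2j−2` and `4j−5` occurs. -/
theorem stackedTriHankel_rank_surjective (j : ℕ) (hj : 2 ≤ j) (r : ℕ) (hr1 : 1 ≤ r)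
    (hr2 : r ≤ 2 * j - 2) :
    ∃ a b : Fin (2 * j - 2) → ℂ, (a, b) ≠ (0, 0) ∧ (stackedTriHankel a b).rank = r :=
  stackedTriHankel_rank_surjective_general j r hr1 hr2
end

section
/- Let j ≥ 2 and let a, b ∈ ℂ^{2j−3}. Then the (4j−6) × (2j−3) matrix N(a,b), obtained by stacking the triangular Hankel matrices H(a) and H(b), satisfies rank N(a,b) ≤ 2j−3, with equality (full column rank) if and only if a_{2j−4} ≠ 0 or b_{2j−4} ≠ 0. Equivalently, the cokernel of N(a,b) (the stalk of the quantum moduli space) has dimension at least 2j−3, with equality on a nonempty Zariski open set. -/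
/-!
`H(a)` vanishes below its anti-diagonal, on which every entry is the top coefficient `a_{n-1}`.
So if `a_{n-1} ≠ 0`, solving `H(a) x = 0` from the bottom row up forces `x = 0`, and `N(a,b)` has
trivial kernel as soon as one top coefficient is nonzero. If both vanish, the last column of
`N(a,b)` is zero. By rank–nullity, full column rank is the same as trivial kernel.
-/

open Matrix

theorem Matrix.rank_eq_card_width_iff {m n K : Type*} [Fintype n] [Field K] (A : Matrix m n K) :
    A.rank = Fintype.card n ↔ ∀ v, A *ᵥ v = 0 → v = 0 := by
  have rank_nullity := LinearMap.finrank_range_add_finrank_ker A.mulVecLin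
  rw [Module.finrank_fintype_fun_eq_card] at rank_nullity
  rw [← ker_mulVecLin_eq_bot_iff, ← Submodule.finrank_eq_zero, rank]
  omega

variable {n : ℕ} {t : Fin n}

theorem triHankel_mulVec_apply_of_forall_lt (a x : Fin n → ℂ) (ht : (t : ℕ) + 1 = n)
    {i k : Fin n} (hik : (i : ℕ) + k = t) (hx : ∀ m < k, x m = 0) :
    (triHankel a *ᵥ x) i = a t * x k := by
  rw [mulVec, dotProduct, Finset.sum_eq_single k]
  · rw [triHankel, dif_pos (by omega)]
    congr
  · intro m _ hmk
    rcases lt_or_gt_of_ne hmk with hlt | hgt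
    · rw [hx m hlt, mul_zero]
    · rw [triHankel, dif_neg (by omega), zero_mul]
  · simp

theorem eq_zero_of_triHankel_mulVec_eq_zero (a : Fin n → ℂ) (ht : (t : ℕ) + 1 = n) (ha : a t ≠ 0)
    {x : Fin n → ℂ} (hx : triHankel a *ᵥ x = 0) : x = 0 := by
  funext k
  induction k using WellFoundedLT.induction with
  | _ k ih =>
    have hrow := congrFun hx ⟨t - k, by omega⟩
    rw [triHankel_mulVec_apply_of_forall_lt a x ht (by simp only; omega) ih] at hrow
    exact (mul_eq_zero.mp hrow).resolve_left ha

theorem triHankel_col_eq_zero (a : Fin n → ℂ) (ht : (t : ℕ) + 1 = n) (ha : a t = 0) :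
    (triHankel a).col t = 0 := by
  funext i
  rw [col_apply, triHankel, Pi.zero_apply]
  split_ifs with h
  · rw [← ha]
    congr
    omega
  · rfl

theorem stackedTriHankel_mulVec_eq_zero_iff (a b x : Fin n → ℂ) :
    stackedTriHankel a b *ᵥ x = 0 ↔ triHankel a *ᵥ x = 0 ∧ triHankel b *ᵥ x = 0 := by
  rw [stackedTriHankel, fromRows_mulVec, ← Sum.elim_zero_zero, Sum.elim_eq_iff]

theorem stackedTriHankel_rank_eq_iff (a b : Fin n → ℂ) (ht : (t : ℕ) + 1 = n) :
    (stackedTriHankel a b).rank = n ↔ a t ≠ 0 ∨ b t ≠ 0 := by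
  have h := (stackedTriHankel a b).rank_eq_card_width_iff
  rw [Fintype.card_fin] at h
  simp_rw [h, stackedTriHankel_mulVec_eq_zero_iff]
  constructor
  · intro hinj
    by_contra! hab
    have hcol := hinj (Pi.single t 1) (by
      simp only [mulVec_single_one, triHankel_col_eq_zero _ ht hab.1, triHankel_col_eq_zero _ ht hab.2,
        and_self])
    simpa using congrFun hcol t
  · rintro (ha | hb) v ⟨hva, hvb⟩
    · exact eq_zero_of_triHankel_mulVec_eq_zero a ht ha hva
    · exact eq_zero_of_triHankel_mulVec_eq_zero b ht hb hvb

/-- For `j ≥ 2` and `a, b ∈ ℂ^{2j−3}`, the `(4j−6) × (2j−3)` stacked triangular Hankel matrix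
`N(a,b)` has rank at most `2j−3`, with equality (full column rank) if and only if
`a_{2j−4} ≠ 0` or `b_{2j−4} ≠ 0`; equivalently, the cokernel of `N(a,b)` has dimension at
least `2j−3`, with equality on a nonempty Zariski open set. -/
theorem stackedTriHankel_W2_rank (j : ℕ) (hj : 2 ≤ j) (a b : Fin (2 * j - 3) → ℂ) :
    (stackedTriHankel a b).rank ≤ 2 * j - 3 ∧
      ((stackedTriHankel a b).rank = 2 * j - 3 ↔
        (a ⟨2 * j - 4, by omega⟩ ≠ 0 ∨ b ⟨2 * j - 4, by omega⟩ ≠ 0)) :=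
  ⟨by simpa using (stackedTriHankel a b).rank_le_card_width,
    stackedTriHankel_rank_eq_iff a b (by simp only; omega)⟩
end
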